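/- arXiv:2306.02358 — 5 statements merged into one kernel-verified Lean document; each statement's English description precedes it below -/
import Mathlib

section
/- For the function f(w, e) = (|L(w) ∩ e| · |R(w) ∩ e|) / (|L(w) ∪ (e \ R(w))| · |R(w) ∪ (e \ L(w))|), if L(w) ∪ R(w) = e then f(w, e) = 1, and conversely if f(w, e) = 1 then L(w) ∪ R(w) ⊆ e. -/
/-- Penalized interaction function. -/
noncomputable def fpen (L R e : Finset ℕ) : ℝ :=
  (((L ∩ e).card : ℝ) * (R ∩ e).card) /
    (((L ∪ (e \ R)).card : ℝ) * (R ∪ (e \ L)).card)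

/-!
If `e = L ∪ R`, then `L ∩ e` and `L ∪ (e \ R)` both equal `L`, and likewise for `R`, so numerator
and denominator agree. Conversely, each factor of the numerator counts a subset of the matching
factor of the denominator, so the ratio is `1` only if `L ∩ e ⊆ L ⊆ L ∪ (e \ R)` are equalities,
i.e. `L ⊆ e`; symmetrically `R ⊆ e`.
-/

open Finset

namespace Finset

variable {α : Type*} [DecidableEq α]

theorem union_sdiff_union_right_eq_left (s t : Finset α) : s ∪ ((s ∪ t) \ t) = s := by
  rw [union_sdiff_right, union_eq_left.mpr sdiff_subset]

theorem subset_of_card_union_le_card_inter {s t u : Finset α} (h : #(s ∪ u) ≤ #(s ∩ t)) :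
    s ⊆ t :=
  inter_eq_left.mp <| eq_of_subset_of_card_le inter_subset_left <|
    (card_le_card subset_union_left).trans h

end Finset

theorem fpen_comm (L R e : Finset ℕ) : fpen R L e = fpen L R e := by
  rw [fpen, fpen, mul_comm (#(R ∩ e) : ℝ), mul_comm (#(R ∪ (e \ L)) : ℝ)]

theorem fpen_union_self {L R : Finset ℕ} (hL : L.Nonempty) (hR : R.Nonempty) :
    fpen L R (L ∪ R) = 1 := by
  have hRL : R ∪ ((L ∪ R) \ L) = R := by
    rw [union_comm L R, union_sdiff_union_right_eq_left]
  rw [fpen, inter_eq_left.mpr subset_union_left, inter_eq_left.mpr subset_union_right,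
    union_sdiff_union_right_eq_left, hRL]
  exact div_self (by positivity)

theorem card_inter_eq_of_fpen_eq_one {L R e : Finset ℕ} (h : fpen L R e = 1) :
    #(L ∩ e) = #(L ∪ (e \ R)) := by
  -- with a zero denominator, division by zero would make `fpen L R e = 0`
  have hden : (#(L ∪ (e \ R)) : ℝ) * #(R ∪ (e \ L)) ≠ 0 := fun h0 => by
    simp [fpen, h0] at h
  have hprod : #(L ∩ e) * #(R ∩ e) = #(L ∪ (e \ R)) * #(R ∪ (e \ L)) := by
    exact_mod_cast (div_eq_one_iff_eq hden).mp h
  have hden' : #(L ∪ (e \ R)) * #(R ∪ (e \ L)) ≠ 0 := by exact_mod_cast hden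
  have hnum : 0 < #(L ∩ e) := Nat.pos_of_ne_zero (left_ne_zero_of_mul (hprod ▸ hden'))
  have hD : 0 < #(R ∪ (e \ L)) := Nat.pos_of_ne_zero (right_ne_zero_of_mul hden')
  exact ((mul_eq_mul_iff_eq_and_eq_of_pos
    (card_le_card (inter_subset_left.trans subset_union_left))
    (card_le_card (inter_subset_left.trans subset_union_left)) hnum hD).mp hprod).1

theorem subset_of_fpen_eq_one {L R e : Finset ℕ} (h : fpen L R e = 1) : L ⊆ e :=
  subset_of_card_union_le_card_inter (card_inter_eq_of_fpen_eq_one h).ge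

theorem fpen_perfect_general (L R e : Finset ℕ)
    (hL : L.Nonempty) (hR : R.Nonempty) :
    (L ∪ R = e → fpen L R e = 1) ∧ (fpen L R e = 1 → L ∪ R ⊆ e) := by
  refine ⟨?_, fun h => union_subset (subset_of_fpen_eq_one h) ?_⟩
  · rintro rfl
    exact fpen_union_self hL hR
  · exact subset_of_fpen_eq_one ((fpen_comm L R e).trans h)

/-- If L ∪ R = e then f(w, e) = 1, and conversely f(w, e) = 1 implies L ∪ R ⊆ e. -/
theorem fpen_perfect (L R e : Finset ℕ)
    (hL : L.Nonempty) (hR : R.Nonempty) (hLR : Disjoint L R) :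
    (L ∪ R = e → fpen L R e = 1) ∧ (fpen L R e = 1 → L ∪ R ⊆ e) :=
  fpen_perfect_general L R e hL hR
end

section
/- For f(w, e) = (|L(w) ∩ e| · |R(w) ∩ e|) / (|L(w) ∪ (e \ R(w))| · |R(w) ∪ (e \ L(w))|), if e ⊆ e' ⊆ e ∪ L(w) ∪ R(w) then f(w, e) ≤ f(w, e'). -/
namespace Finset

variable {α : Type*} [DecidableEq α]

theorem union_sdiff_eq_of_subset_of_subset_union {A B s t : Finset α} (hst : s ⊆ t)
    (hts : t ⊆ s ∪ A ∪ B) : A ∪ (t \ B) = A ∪ (s \ B) := by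
  ext x
  grind

end Finset

open Finset

theorem fpen_mono_general (L R e e' : Finset ℕ)
    (h1 : e ⊆ e') (h2 : e' ⊆ e ∪ L ∪ R) :
    fpen L R e ≤ fpen L R e' := by
  have hLe : L ∪ (e' \ R) = L ∪ (e \ R) := union_sdiff_eq_of_subset_of_subset_union h1 h2
  have hRe : R ∪ (e' \ L) = R ∪ (e \ L) :=
    union_sdiff_eq_of_subset_of_subset_union h1 (by rwa [union_right_comm e])
  unfold fpen
  rw [hLe, hRe]
  gcongr

/-- Enlarging a candidate hyperedge with wing-nodes never decreases fpen. -/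
theorem fpen_mono (L R e e' : Finset ℕ)
    (hL : L.Nonempty) (hR : R.Nonempty) (hLR : Disjoint L R)
    (h1 : e ⊆ e') (h2 : e' ⊆ e ∪ L ∪ R) :
    fpen L R e ≤ fpen L R e' :=
  fpen_mono_general L R e e' h1 h2
end

section
/- For f(w, e) = (|L(w) ∩ e| · |R(w) ∩ e|) / (|L(w) ∪ (e \ R(w))| · |R(w) ∪ (e \ L(w))|), if e ⊊ e' ⊆ e ∪ L(w) ∪ R(w) and e' intersects both L(w) and R(w), then f(w, e) < f(w, e'). -/
/-!
Adding wing nodes to `e` leaves both denominators of `fpen` unchanged, since `L ∪ (e \ R)`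
already contains every node of `L` and `e'` only gains nodes of `L` and `R`. The numerator
`|L ∩ e| · |R ∩ e|` strictly grows, because at least one factor strictly grows and both
factors of the new numerator are positive.
-/

open Finset

namespace Finset

theorem card_mul_card_lt_card_mul_card {α : Type*} {s s' t t' : Finset α} (hs : s ⊆ s')
    (ht : t ⊆ t') (hst : s ⊂ s' ∨ t ⊂ t') (hs' : s'.Nonempty) (ht' : t'.Nonempty) :
    #s * #t < #s' * #t' := by
  rcases hst with h | h
  · exact Nat.mul_lt_mul_of_lt_of_le (card_lt_card h) (card_le_card ht) ht'.card_pos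
  · exact Nat.mul_lt_mul_of_le_of_lt (card_le_card hs) (card_lt_card h) hs'.card_pos

variable {α : Type*} [DecidableEq α]

theorem union_sdiff_eq_of_subset_of_subset_union_s5 {A B e e' : Finset α} (h : e ⊆ e')
    (h' : e' ⊆ e ∪ A ∪ B) : A ∪ (e' \ B) = A ∪ (e \ B) := by
  ext x
  grind

theorem inter_ssubset_inter_or_of_ssubset_of_subset_union {A B e e' : Finset α} (h : e ⊂ e')
    (h' : e' ⊆ e ∪ A ∪ B) : A ∩ e ⊂ A ∩ e' ∨ B ∩ e ⊂ B ∩ e' := by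
  simp only [ssubset_iff_subset_ne, inter_subset_inter_left h.subset, true_and]
  by_contra! ⟨hA, hB⟩
  refine h.not_subset fun x hx => ?_
  rcases mem_union.1 (h' hx) with hx' | hxB
  · rcases mem_union.1 hx' with hxe | hxA
    · exact hxe
    · exact mem_of_mem_inter_right (hA ▸ mem_inter_of_mem hxA hx)
  · exact mem_of_mem_inter_right (hB ▸ mem_inter_of_mem hxB hx)

end Finset

theorem fpen_strict_mono_general (L R e e' : Finset ℕ)
    (h1 : e ⊂ e') (h2 : e' ⊆ e ∪ L ∪ R)
    (hov : (e' ∩ L).Nonempty ∧ (e' ∩ R).Nonempty) :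
    fpen L R e < fpen L R e' := by
  obtain ⟨hLe', hRe'⟩ := hov
  rw [inter_comm] at hLe' hRe'
  have hnum : #(L ∩ e) * #(R ∩ e) < #(L ∩ e') * #(R ∩ e') :=
    card_mul_card_lt_card_mul_card (inter_subset_inter_left h1.subset)
      (inter_subset_inter_left h1.subset) (inter_ssubset_inter_or_of_ssubset_of_subset_union h1 h2)
      hLe' hRe'
  have hden : 0 < #(L ∪ (e \ R)) * #(R ∪ (e \ L)) :=
    mul_pos ((hLe'.mono inter_subset_left).mono subset_union_left).card_pos
      ((hRe'.mono inter_subset_left).mono subset_union_left).card_pos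
  have h2' : e' ⊆ e ∪ R ∪ L := union_right_comm e L R ▸ h2
  unfold fpen
  rw [union_sdiff_eq_of_subset_of_subset_union_s5 h1.subset h2,
    union_sdiff_eq_of_subset_of_subset_union_s5 h1.subset h2']
  exact div_lt_div_of_pos_right (by exact_mod_cast hnum) (by exact_mod_cast hden)

/-- Strictly enlarging a candidate hyperedge with wing-nodes so that it overlaps
both wings strictly increases fpen. -/
theorem fpen_strict_mono (L R e e' : Finset ℕ)
    (hL : L.Nonempty) (hR : R.Nonempty) (hLR : Disjoint L R)
    (h1 : e ⊂ e') (h2 : e' ⊆ e ∪ L ∪ R)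
    (hov : (e' ∩ L).Nonempty ∧ (e' ∩ R).Nonempty) :
    fpen L R e < fpen L R e' :=
  fpen_strict_mono_general L R e e' h1 h2 hov
end

section
/- Under a bijection g: C → C' with e ⊆ g(e) ⊆ e ∪ L(w) ∪ R(w) for every e ∈ C, HyperTrans satisfies T(w, C; f) ≤ T(w, C'; f), provided f(w, e) ≤ f(w, e') whenever e ⊆ e' ⊆ e ∪ L(w) ∪ R(w). -/
/-!
Compare the two sums pair by pair. A hyperedge `e ∈ C` covering `{v1, v2}` is matched with
`g e ∈ C'`, which covers the same pair and, being an enlargement of `e` by wing nodes, has weight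
`f (g e) ≥ f e`; a hyperedge not covering the pair contributes `0`, which no max falls below.
-/

/-- Max over candidate hyperedges, with the empty max equal to 0. -/
noncomputable def hmax (C : Finset (Finset ℕ)) (g : Finset ℕ → ℝ) : ℝ := C.fold max 0 g

/-- HyperTrans of the hyperwedge with wings L, R w.r.t. candidate set C and
interaction function f. -/
noncomputable def HT (L R : Finset ℕ) (C : Finset (Finset ℕ)) (f : Finset ℕ → ℝ) : ℝ :=
  (∑ v1 ∈ L, ∑ v2 ∈ R, hmax C (fun e => if v1 ∈ e ∧ v2 ∈ e then f e else 0)) /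
    ((L.card : ℝ) * R.card)

lemma le_hmax {C : Finset (Finset ℕ)} {h : Finset ℕ → ℝ} {e : Finset ℕ} (he : e ∈ C) :
    h e ≤ hmax C h :=
  (Finset.le_fold_max _).mpr (Or.inr ⟨e, he, le_rfl⟩)

lemma hmax_nonneg (C : Finset (Finset ℕ)) (h : Finset ℕ → ℝ) : 0 ≤ hmax C h :=
  (Finset.le_fold_max _).mpr (Or.inl le_rfl)

lemma hmax_le {C : Finset (Finset ℕ)} {h : Finset ℕ → ℝ} {b : ℝ} (hb : 0 ≤ b)
    (H : ∀ e ∈ C, h e ≤ b) : hmax C h ≤ b :=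
  (Finset.fold_max_le _).mpr ⟨hb, H⟩

lemma hmax_le_hmax {C C' : Finset (Finset ℕ)} {h h' : Finset ℕ → ℝ}
    (H : ∀ e ∈ C, h e ≤ hmax C' h') : hmax C h ≤ hmax C' h' :=
  hmax_le (hmax_nonneg C' h') H

lemma HT_le_HT {L R : Finset ℕ} {C C' : Finset (Finset ℕ)} {f f' : Finset ℕ → ℝ}
    (H : ∀ v1 ∈ L, ∀ v2 ∈ R, hmax C (fun e => if v1 ∈ e ∧ v2 ∈ e then f e else 0) ≤
      hmax C' (fun e => if v1 ∈ e ∧ v2 ∈ e then f' e else 0)) :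
    HT L R C f ≤ HT L R C' f' :=
  div_le_div_of_nonneg_right
    (Finset.sum_le_sum fun v1 hv1 => Finset.sum_le_sum fun v2 hv2 => H v1 hv1 v2 hv2)
    (by positivity)

theorem HT_mono_under_bijection_general (L R : Finset ℕ) (C C' : Finset (Finset ℕ))
    (f : Finset ℕ → ℝ) (g : Finset ℕ → Finset ℕ)
    (hg : Set.BijOn g (C : Set (Finset ℕ)) (C' : Set (Finset ℕ)))
    (henl : ∀ e ∈ C, e ⊆ g e ∧ g e ⊆ e ∪ L ∪ R)
    (hfmono : ∀ e e', e ⊆ e' → e' ⊆ e ∪ L ∪ R → f e ≤ f e') :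
    HT L R C f ≤ HT L R C' f := by
  refine HT_le_HT fun v1 _ v2 _ => hmax_le_hmax fun e he => ?_
  obtain ⟨hsub, hsup⟩ := henl e he
  split_ifs with hmem
  · calc f e ≤ f (g e) := hfmono e (g e) hsub hsup
      _ = _ := by rw [if_pos ⟨hsub hmem.1, hsub hmem.2⟩]
      _ ≤ _ := le_hmax (hg.mapsTo he)
  · exact hmax_nonneg _ _

/-- Under a bijection of candidate sets that enlarges each hyperedge with
wing-nodes, HyperTrans does not decrease, provided f is monotone under such
enlargements and nonnegative. -/
theorem HT_mono_under_bijection (L R : Finset ℕ) (C C' : Finset (Finset ℕ))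
    (f : Finset ℕ → ℝ) (g : Finset ℕ → Finset ℕ)
    (hL : L.Nonempty) (hR : R.Nonempty) (hLR : Disjoint L R)
    (hf : ∀ e, 0 ≤ f e)
    (hg : Set.BijOn g (C : Set (Finset ℕ)) (C' : Set (Finset ℕ)))
    (henl : ∀ e ∈ C, e ⊆ g e ∧ g e ⊆ e ∪ L ∪ R)
    (hfmono : ∀ e e', e ⊆ e' → e' ⊆ e ∪ L ∪ R → f e ≤ f e') :
    HT L R C f ≤ HT L R C' f :=
  HT_mono_under_bijection_general L R C C' f g hg henl hfmono
end

section
/- When every hyperedge of a hypergraph G has exactly 2 nodes, the HyperTrans hypergraph transitivity T(G) = (1/|W|) Σ_{w ∈ W} T(w, E; f) with f(w,e) = (|L(w) ∩ e|·|R(w) ∩ e|) / (|L(w) ∪ (e \ R(w))|·|R(w) ∪ (e \ L(w))|) equals the fraction of wedges of G (as a graph) that are closed by an edge, i.e., the graph transitivity 3·(number of triangles)/(number of wedges). -/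
/-- Hyperwedge transitivity of an unordered pair of hyperedges `w`
(a 2-element set of hyperedges), with the penalized `fpen`, written
symmetrically over the two orderings. -/
noncomputable def Tw (E : Finset (Finset ℕ)) (w : Finset (Finset ℕ)) : ℝ :=
  (∑ a ∈ w, ∑ b ∈ w \ {a}, HT (a \ b) (b \ a) E (fpen (a \ b) (b \ a))) / 2

/-- The set of hyperwedges of the hypergraph with hyperedge set E. -/
noncomputable def hyperwedges (E : Finset (Finset ℕ)) : Finset (Finset (Finset ℕ)) :=
  (E.powersetCard 2).filter
    (fun w => ∀ a ∈ w, ∀ b ∈ w, a ≠ b → ((a ∩ b).Nonempty ∧ ¬ a ⊆ b ∧ ¬ b ⊆ a))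

/-!
In a graph a hyperwedge is a pair of edges `{u, x}`, `{v, x}` with `u, v, x` distinct. Its wings
are the singletons `{u}` and `{v}`, the only edge meeting both wings is `{u, v}`, and the penalty
`fpen {u} {v} {u, v}` equals `1`; hence `T(w)` is the indicator of the wedge being closed. A closed
wedge spans the triangle `{u, v, x}`, and every triangle is spanned by exactly the three pairs of
its sides, so the sum of `T(w)` is three times the number of triangles.
-/

open Finset

section
variable {α : Type*} [DecidableEq α]

theorem exists_eq_pair_of_card_eq_two_of_inter_nonempty {a b : Finset α} (ha : #a = 2)
    (hb : #b = 2) (hab : a ≠ b) (hi : (a ∩ b).Nonempty) :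
    ∃ u v x, u ≠ v ∧ u ≠ x ∧ v ≠ x ∧ a = {u, x} ∧ b = {v, x} := by
  obtain ⟨x, hx⟩ := hi
  rw [mem_inter] at hx
  obtain ⟨u, hu⟩ := card_eq_one.mp (by rw [card_erase_of_mem hx.1, ha] : #(a.erase x) = 1)
  obtain ⟨v, hv⟩ := card_eq_one.mp (by rw [card_erase_of_mem hx.2, hb] : #(b.erase x) = 1)
  have ha' : a = {u, x} := by rw [pair_comm, ← hu, insert_erase hx.1]
  have hb' : b = {v, x} := by rw [pair_comm, ← hv, insert_erase hx.2]
  refine ⟨u, v, x, ?_, ?_, ?_, ha', hb'⟩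
  · rintro rfl; exact hab (ha'.trans hb'.symm)
  · rintro rfl; simp [ha'] at ha
  · rintro rfl; simp [hb'] at hb

theorem powersetCard_two_triple {u v x : α} (huv : u ≠ v) (hux : u ≠ x) (hvx : v ≠ x) :
    ({u, v, x} : Finset α).powersetCard 2 = {{u, v}, {u, x}, {v, x}} := by
  rw [powersetCard_succ_insert (by simp [huv, hux]), powersetCard_succ_insert (by simp [hvx]),
    powersetCard_eq_empty.mpr (by simp), powersetCard_one, powersetCard_one]
  ext p
  simp only [map_singleton, Function.Embedding.coeFn_mk, image_singleton, empty_union, map_insert,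
    image_insert, union_insert, singleton_union, mem_insert, mem_singleton]
  tauto

theorem mem_and_mem_iff_eq_pair {e : Finset α} (he : #e = 2) {u v : α} (huv : u ≠ v) :
    u ∈ e ∧ v ∈ e ↔ e = {u, v} := by
  refine ⟨fun h => (eq_of_subset_of_card_le (insert_subset h.1 (by simpa using h.2))
    (by rw [he, card_pair huv])).symm, by rintro rfl; simp⟩

theorem pair_union_pair (u v x : α) : ({u, x} ∪ {v, x} : Finset α) = {u, v, x} := by
  grind

theorem sup_id_pair (a b : Finset α) : ({a, b} : Finset (Finset α)).sup id = a ∪ b := by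
  simp

theorem card_union_of_card_eq_two_of_inter_nonempty {a b : Finset α} (ha : #a = 2)
    (hb : #b = 2) (hab : a ≠ b) (hi : (a ∩ b).Nonempty) : #(a ∪ b) = 3 := by
  obtain ⟨u, v, x, huv, hux, hvx, rfl, rfl⟩ :=
    exists_eq_pair_of_card_eq_two_of_inter_nonempty ha hb hab hi
  rw [pair_union_pair]
  exact card_eq_three.mpr ⟨u, v, x, huv, hux, hvx, rfl⟩

end

theorem hmax_congr {C : Finset (Finset ℕ)} {g g' : Finset ℕ → ℝ} (h : ∀ e ∈ C, g e = g' e) :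
    hmax C g = hmax C g' :=
  fold_congr h

theorem hmax_indicator (C : Finset (Finset ℕ)) (c : Finset ℕ) :
    hmax C (fun e => if e = c then 1 else 0) = if c ∈ C then 1 else 0 := by
  refine le_antisymm ((fold_max_le _).2 ⟨by split_ifs <;> norm_num, fun e he => ?_⟩)
    ((le_fold_max _).2 ?_)
  · split_ifs with hec hc
    · rfl
    · exact absurd (hec ▸ he) hc
    · exact zero_le_one
    · rfl
  · split_ifs with hc
    · exact Or.inr ⟨c, hc, by simp⟩
    · exact Or.inl le_rfl

theorem fpen_singleton_singleton_pair {u v : ℕ} (huv : u ≠ v) : fpen {u} {v} {u, v} = 1 := by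
  have hu : ({u, v} : Finset ℕ) \ {v} = {u} := by grind
  have hv : ({u, v} : Finset ℕ) \ {u} = {v} := by grind
  simp [fpen, hu, hv, huv]

theorem HT_singleton_singleton {E : Finset (Finset ℕ)} (hE : ∀ e ∈ E, #e = 2) {u v : ℕ}
    (huv : u ≠ v) : HT {u} {v} E (fpen {u} {v}) = if {u, v} ∈ E then 1 else 0 := by
  have hterm : ∀ e ∈ E, (if u ∈ e ∧ v ∈ e then fpen {u} {v} e else 0) =
      if e = {u, v} then 1 else 0 := by
    intro e he
    simp only [mem_and_mem_iff_eq_pair (hE e he) huv]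
    split_ifs with h
    · rw [h, fpen_singleton_singleton_pair huv]
    · rfl
  simp only [HT, sum_singleton, card_singleton, Nat.cast_one, mul_one, div_one]
  rw [hmax_congr hterm, hmax_indicator]

theorem Tw_pair {E : Finset (Finset ℕ)} {a b : Finset ℕ} (hab : a ≠ b) :
    Tw E {a, b} = (HT (a \ b) (b \ a) E (fpen (a \ b) (b \ a)) +
      HT (b \ a) (a \ b) E (fpen (b \ a) (a \ b))) / 2 := by
  simp [Tw, sum_pair hab, hab]

theorem Tw_wedge {E : Finset (Finset ℕ)} (hE : ∀ e ∈ E, #e = 2) {u v x : ℕ} (huv : u ≠ v)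
    (hux : u ≠ x) (hvx : v ≠ x) :
    Tw E {{u, x}, {v, x}} = if {u, v} ∈ E then 1 else 0 := by
  have hne : ({u, x} : Finset ℕ) ≠ {v, x} := fun h => by
    simpa [huv, hux] using (h ▸ mem_insert_self u {x} : u ∈ ({v, x} : Finset ℕ))
  have hsdiff : ({u, x} : Finset ℕ) \ {v, x} = {u} := by grind
  have hsdiff' : ({v, x} : Finset ℕ) \ {u, x} = {v} := by grind
  rw [Tw_pair hne, hsdiff, hsdiff', HT_singleton_singleton hE huv,
    HT_singleton_singleton hE huv.symm, pair_comm v u]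
  split_ifs <;> norm_num

section Graph

variable {E : Finset (Finset ℕ)}

theorem mem_hyperwedges_iff (hE : ∀ e ∈ E, #e = 2) {w : Finset (Finset ℕ)} :
    w ∈ hyperwedges E ↔ ∃ a ∈ E, ∃ b ∈ E, a ≠ b ∧ (a ∩ b).Nonempty ∧ w = {a, b} := by
  have hnot_subset : ∀ a ∈ E, ∀ b ∈ E, a ≠ b → ¬a ⊆ b := fun a ha b hb hab hsub =>
    hab (eq_of_subset_of_card_le hsub (by rw [hE a ha, hE b hb]))
  constructor
  · intro hw
    obtain ⟨⟨hwE, hw2⟩, hwedge⟩ := mem_filter.mp hw |>.imp_left mem_powersetCard.mp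
    obtain ⟨a, b, hab, rfl⟩ := card_eq_two.mp hw2
    have ha : a ∈ E := hwE (mem_insert_self a {b})
    have hb : b ∈ E := hwE (mem_insert_of_mem (mem_singleton_self b))
    exact ⟨a, ha, b, hb, hab, (hwedge a (by simp) b (by simp) hab).1, rfl⟩
  · rintro ⟨a, ha, b, hb, hab, hi, rfl⟩
    refine mem_filter.mpr ⟨mem_powersetCard.mpr ⟨by simp [insert_subset_iff, ha, hb],
      card_pair hab⟩, ?_⟩
    simp only [mem_insert, mem_singleton]
    rintro a' (rfl | rfl) b' (rfl | rfl) hne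
    · exact absurd rfl hne
    · exact ⟨hi, hnot_subset _ ha _ hb hne, hnot_subset _ hb _ ha hne.symm⟩
    · exact ⟨inter_comm a' b' ▸ hi, hnot_subset _ hb _ ha hne, hnot_subset _ ha _ hb hne.symm⟩
    · exact absurd rfl hne

def triangles (V : Finset ℕ) (E : Finset (Finset ℕ)) : Finset (Finset ℕ) :=
  (V.powersetCard 3).filter (fun t => ∀ p ∈ t.powersetCard 2, p ∈ E)

theorem Tw_eq_ite_sup_mem_triangles {V : Finset ℕ} (hVE : ∀ e ∈ E, e ⊆ V)
    (hE : ∀ e ∈ E, #e = 2) {w : Finset (Finset ℕ)} (hw : w ∈ hyperwedges E) :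
    Tw E w = if w.sup id ∈ triangles V E then 1 else 0 := by
  obtain ⟨a, ha, b, hb, hab, hi, rfl⟩ := (mem_hyperwedges_iff hE).mp hw
  obtain ⟨u, v, x, huv, hux, hvx, rfl, rfl⟩ :=
    exists_eq_pair_of_card_eq_two_of_inter_nonempty (hE _ ha) (hE _ hb) hab hi
  rw [Tw_wedge hE huv hux hvx, sup_id_pair, pair_union_pair]
  have hV : {u, v, x} ⊆ V := pair_union_pair u v x ▸ union_subset (hVE _ ha) (hVE _ hb)
  have h3 : #{u, v, x} = 3 := card_eq_three.mpr ⟨u, v, x, huv, hux, hvx, rfl⟩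
  refine if_congr ?_ rfl rfl
  rw [triangles, mem_filter, mem_powersetCard, powersetCard_two_triple huv hux hvx]
  simp [hV, h3, ha, hb]

theorem filter_hyperwedges_sup_id_eq {V t : Finset ℕ} (hE : ∀ e ∈ E, #e = 2)
    (ht : t ∈ triangles V E) :
    (hyperwedges E).filter (fun w => w.sup id = t) = (t.powersetCard 2).powersetCard 2 := by
  obtain ⟨⟨-, ht3⟩, htE⟩ := mem_filter.mp ht |>.imp_left mem_powersetCard.mp
  ext w
  simp only [mem_filter, mem_powersetCard, mem_hyperwedges_iff hE]
  constructor
  · rintro ⟨⟨a, ha, b, hb, hab, -, rfl⟩, rfl⟩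
    simp [insert_subset_iff, hE a ha, hE b hb, card_pair hab]
  · rintro ⟨hwt, hw2⟩
    obtain ⟨a, b, hab, rfl⟩ := card_eq_two.mp hw2
    obtain ⟨⟨hat, ha2⟩, ⟨hbt, hb2⟩⟩ : (a ⊆ t ∧ #a = 2) ∧ (b ⊆ t ∧ #b = 2) := by
      simpa [insert_subset_iff] using hwt
    have hi : (a ∩ b).Nonempty :=
      inter_nonempty_of_card_lt_card_add_card hat hbt (by omega)
    have hunion : a ∪ b = t := eq_of_subset_of_card_le (union_subset hat hbt) (by
      rw [ht3, card_union_of_card_eq_two_of_inter_nonempty ha2 hb2 hab hi])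
    exact ⟨⟨a, htE a (mem_powersetCard.mpr ⟨hat, ha2⟩), b,
      htE b (mem_powersetCard.mpr ⟨hbt, hb2⟩), hab, hi, rfl⟩, by rw [sup_id_pair, hunion]⟩

theorem card_filter_hyperwedges_sup_id_mem_triangles {V : Finset ℕ} (hE : ∀ e ∈ E, #e = 2) :
    #((hyperwedges E).filter (fun w => w.sup id ∈ triangles V E)) = 3 * #(triangles V E) := by
  have hmaps : Set.MapsTo (fun w : Finset (Finset ℕ) => w.sup id)
      ↑((hyperwedges E).filter (fun w => w.sup id ∈ triangles V E)) ↑(triangles V E) :=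
    fun w hw => (mem_filter.mp hw).2
  have hfiber : ∀ t ∈ triangles V E, #(((hyperwedges E).filter
      (fun w => w.sup id ∈ triangles V E)).filter (fun w => w.sup id = t)) = 3 := by
    intro t ht
    have ht3 : #t = 3 := (mem_powersetCard.mp (mem_filter.mp ht).1).2
    have hsup : ∀ w : Finset (Finset ℕ), w.sup id = t → w.sup id ∈ triangles V E :=
      fun w h => h ▸ ht
    rw [filter_filter, filter_congr fun w _ => and_iff_right_of_imp (hsup w),
      filter_hyperwedges_sup_id_eq hE ht, card_powersetCard, card_powersetCard, ht3]
    rfl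
  rw [card_eq_sum_card_fiberwise hmaps, sum_congr rfl hfiber, sum_const, smul_eq_mul, mul_comm]

end Graph

/-- When every hyperedge has exactly 2 nodes, the HyperTrans hypergraph
transitivity equals the graph transitivity 3·(#triangles)/(#wedges). -/
theorem HT_reduces_to_graph_transitivity (V : Finset ℕ) (E : Finset (Finset ℕ))
    (hVE : ∀ e ∈ E, e ⊆ V) (h2 : ∀ e ∈ E, e.card = 2) :
    (∑ w ∈ hyperwedges E, Tw E w) / ((hyperwedges E).card : ℝ) =
      3 * ((V.powersetCard 3).filter
            (fun t => ∀ p ∈ t.powersetCard 2, p ∈ E)).card /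
        ((hyperwedges E).card : ℝ) := by
  have hclosed : ∑ w ∈ hyperwedges E, Tw E w =
      #((hyperwedges E).filter (fun w => w.sup id ∈ triangles V E)) := by
    rw [sum_congr rfl fun w hw => Tw_eq_ite_sup_mem_triangles hVE h2 hw, sum_boole]
  rw [hclosed, card_filter_hyperwedges_sup_id_mem_triangles h2, triangles]
  push_cast
  rfl
end
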